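/- The Catalan matroid C_n is self-dual: the map x ↦ 2n + 1 − x on {1,…,2n} is an isomorphism from C_n to its dual matroid C_n*; equivalently, B is a basis of C_n if and only if {2n+1−c : c ∈ {1,…,2n} \ B} is a basis of C_n. -/

import Mathlib

/-- Height of the path with up-step set `A` after `x` steps: `2·|A ∩ {1,…,x}| − x`. -/
def ht (A : Finset ℕ) (x : ℕ) : ℤ := 2 * (A ∩ Finset.Icc 1 x).card - x

/-- `P` is the up-step set of a Dyck path of length `2n`. -/
def IsDyck (n : ℕ) (P : Finset ℕ) : Prop :=
  P ⊆ Finset.Icc 1 (2 * n) ∧ P.card = n ∧ ∀ x ≤ 2 * n, 0 ≤ ht P x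

/-!
Complementing a path `A ⊆ {1,…,m}` negates its heights, and reflecting it by `x ↦ m + 1 − x`
sends its height at `x` to `ht A m − ht A (m − x)`. Hence the reflected complement `B'` of `B` has
`ht B' x = ht B (2n − x) − ht B (2n)`: `B'` ends at height `0` exactly when `B` does, and then
its heights are those of `B` read backwards.
-/

open Finset

lemma ht_zero (A : Finset ℕ) : ht A 0 = 0 := by
  simp [ht]

lemma ht_of_subset {A : Finset ℕ} {m : ℕ} (hA : A ⊆ Icc 1 m) : ht A m = 2 * #A - m := by
  rw [ht, inter_eq_left.mpr hA]

lemma ht_Icc_sdiff {m x : ℕ} (A : Finset ℕ) (hx : x ≤ m) : ht (Icc 1 m \ A) x = -ht A x := by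
  have hcomm : (Icc 1 m \ A) ∩ Icc 1 x = Icc 1 x \ A := by
    ext a; simp only [mem_inter, mem_sdiff, mem_Icc]; grind
  have hsplit := card_sdiff_add_card_inter (Icc 1 x) A
  rw [Nat.card_Icc, inter_comm] at hsplit
  simp only [ht, hcomm]
  omega

lemma reflect_injOn {m : ℕ} {A : Finset ℕ} (hA : A ⊆ Icc 1 m) : Set.InjOn (m + 1 - ·) A := by
  intro a ha b hb hab
  have := mem_Icc.mp (hA ha); have := mem_Icc.mp (hA hb)
  simp only at hab
  omega

lemma image_reflect_inter_Icc {m x : ℕ} {A : Finset ℕ} (hA : A ⊆ Icc 1 m) (hx : x ≤ m) :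
    A.image (m + 1 - ·) ∩ Icc 1 x = (A.filter (¬ · ≤ m - x)).image (m + 1 - ·) := by
  ext a
  simp only [mem_inter, mem_image, mem_filter, mem_Icc]
  constructor
  · rintro ⟨⟨c, hc, rfl⟩, -, hcx⟩
    have := mem_Icc.mp (hA hc)
    exact ⟨c, ⟨hc, by omega⟩, rfl⟩
  · rintro ⟨c, ⟨hc, hcx⟩, rfl⟩
    have := mem_Icc.mp (hA hc)
    exact ⟨⟨c, hc, rfl⟩, by omega, by omega⟩

lemma ht_image_reflect {m x : ℕ} {A : Finset ℕ} (hA : A ⊆ Icc 1 m) (hx : x ≤ m) :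
    ht (A.image (m + 1 - ·)) x = ht A m - ht A (m - x) := by
  have hlow : A ∩ Icc 1 (m - x) = A.filter (· ≤ m - x) := by
    ext a; have := @hA a; simp only [mem_inter, mem_filter, mem_Icc] at this ⊢; grind
  have hsplit := card_filter_add_card_filter_not (s := A) (· ≤ m - x)
  rw [ht, image_reflect_inter_Icc hA hx, card_image_of_injOn
    ((reflect_injOn hA).mono (coe_subset.mpr (filter_subset _ A))), ht_of_subset hA, ht, hlow]
  push_cast [Nat.cast_sub hx]
  omega

lemma image_reflect_subset_Icc {m : ℕ} {A : Finset ℕ} (hA : A ⊆ Icc 1 m) :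
    A.image (m + 1 - ·) ⊆ Icc 1 m := by
  intro a ha
  obtain ⟨c, hc, rfl⟩ := mem_image.mp ha
  have := mem_Icc.mp (hA hc)
  exact mem_Icc.mpr ⟨by omega, by omega⟩

lemma ht_image_reflect_Icc_sdiff {m x : ℕ} (B : Finset ℕ) (hx : x ≤ m) :
    ht ((Icc 1 m \ B).image (m + 1 - ·)) x = ht B (m - x) - ht B m := by
  rw [ht_image_reflect sdiff_subset hx, ht_Icc_sdiff B le_rfl, ht_Icc_sdiff B (Nat.sub_le m x)]
  ring

lemma isDyck_iff_ht {n : ℕ} {P : Finset ℕ} (hP : P ⊆ Icc 1 (2 * n)) :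
    IsDyck n P ↔ ht P (2 * n) = 0 ∧ ∀ x ≤ 2 * n, 0 ≤ ht P x := by
  rw [IsDyck, ht_of_subset hP]
  push_cast
  constructor
  · rintro ⟨-, hcard, hpos⟩
    exact ⟨by omega, hpos⟩
  · rintro ⟨hcard, hpos⟩
    exact ⟨hP, by omega, hpos⟩

theorem catalan_self_dual_general (n : ℕ) (B : Finset ℕ)
    (hB : B ⊆ Finset.Icc 1 (2 * n)) :
    IsDyck n B ↔
      IsDyck n ((Finset.Icc 1 (2 * n) \ B).image (fun c => 2 * n + 1 - c)) := by
  have hht := fun x (hx : x ≤ 2 * n) => ht_image_reflect_Icc_sdiff B hx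
  rw [isDyck_iff_ht hB, isDyck_iff_ht (image_reflect_subset_Icc sdiff_subset),
    hht _ le_rfl, Nat.sub_self, ht_zero, zero_sub, neg_eq_zero]
  refine and_congr_right fun hB0 => ⟨fun hpos x hx => ?_, fun hpos x hx => ?_⟩
  · rw [hht x hx, hB0, sub_zero]
    exact hpos _ (Nat.sub_le _ _)
  · simpa [hht _ (Nat.sub_le _ x), Nat.sub_sub_self hx, hB0] using hpos _ (Nat.sub_le _ x)

/-- The Catalan matroid is self-dual: `B` is a basis if and only if the image of its
complement under the reflection `x ↦ 2n + 1 − x` is a basis.  (The bases of the dual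
matroid are the complements of bases, so this says `x ↦ 2n + 1 − x` is an isomorphism
from the Catalan matroid to its dual.) -/
theorem catalan_self_dual (n : ℕ) (hn : 0 < n) (B : Finset ℕ)
    (hB : B ⊆ Finset.Icc 1 (2 * n)) :
    IsDyck n B ↔
      IsDyck n ((Finset.Icc 1 (2 * n) \ B).image (fun c => 2 * n + 1 - c)) :=
  catalan_self_dual_general n B hB
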